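/- Let S be a shape in the triangular grid with at least two points and let v ∈ S be a boundary point of S. Then: (a) v is redundant if and only if the neighbors of v outside S form a single maximal arc (equivalently, the neighbors of v outside S induce a connected subgraph of G); and (b) v is erodable w.r.t. S if and only if the neighbors of v outside S form a single maximal arc all of whose points lie in an infinite connected component of the complement of S. -/

import Mathlib

/-- The triangular grid: the simple graph on ℤ × ℤ where two vertices are adjacent
iff their difference lies in {(1,0),(−1,0),(0,1),(0,−1),(1,−1),(−1,1)}. -/
def triGrid : SimpleGraph (ℤ × ℤ) where
  Adj u v := (u.1 - v.1, u.2 - v.2) ∈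
    ({(1,0), (-1,0), (0,1), (0,-1), (1,-1), (-1,1)} : Set (ℤ × ℤ))
  symm := by
    constructor
    intro u v h
    simp only [Set.mem_insert_iff, Set.mem_singleton_iff, Prod.mk.injEq] at h ⊢
    omega
  loopless := by
    constructor
    intro u h
    simp only [Set.mem_insert_iff, Set.mem_singleton_iff, Prod.mk.injEq] at h
    omega

/-- The subgraph of the triangular grid induced by `S`, viewed as a graph on all of
ℤ × ℤ (vertices outside `S` are isolated): an edge requires both endpoints in `S`. -/
def gOn (S : Set (ℤ × ℤ)) : SimpleGraph (ℤ × ℤ) where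
  Adj u v := triGrid.Adj u v ∧ u ∈ S ∧ v ∈ S
  symm := ⟨fun u v h => ⟨triGrid.adj_symm h.1, h.2.2, h.2.1⟩⟩
  loopless := ⟨fun u h => triGrid.irrefl h.1⟩

/-- A shape: a finite nonempty set of grid points. -/
def IsShape (S : Set (ℤ × ℤ)) : Prop := S.Finite ∧ S.Nonempty

/-- The subgraph of the grid induced by `S` is connected. -/
def ShapeConnected (S : Set (ℤ × ℤ)) : Prop :=
  ∀ u ∈ S, ∀ v ∈ S, (gOn S).Reachable u v

/-- A connected shape. -/
def ConnectedShape (S : Set (ℤ × ℤ)) : Prop := IsShape S ∧ ShapeConnected S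

/-- The connected component of `x` in the subgraph induced by the complement of `S`. -/
def compOf (S : Set (ℤ × ℤ)) (x : ℤ × ℤ) : Set (ℤ × ℤ) :=
  {y | (gOn Sᶜ).Reachable x y}

/-- A hole point of `S`: a point lying in a finite connected component of the
complement of `S`. -/
def IsHolePoint (S : Set (ℤ × ℤ)) (x : ℤ × ℤ) : Prop :=
  x ∉ S ∧ (compOf S x).Finite

/-- A simply-connected shape: connected and with no holes. -/
def SimplyConnectedShape (S : Set (ℤ × ℤ)) : Prop :=
  ConnectedShape S ∧ ∀ x, ¬ IsHolePoint S x

/-- Graph distance within the subgraph induced by `S`. -/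
noncomputable def distS (S : Set (ℤ × ℤ)) (u v : ℤ × ℤ) : ℕ := (gOn S).dist u v

/-- Diameter of the shape `S` w.r.t. `distS`. -/
noncomputable def shapeDiam (S : Set (ℤ × ℤ)) : ℕ :=
  sSup {d : ℕ | ∃ u ∈ S, ∃ v ∈ S, distS S u v = d}

/-- A boundary point of `S`: a point of `S` with a neighbor outside `S`. -/
def IsBoundaryPt (S : Set (ℤ × ℤ)) (v : ℤ × ℤ) : Prop :=
  v ∈ S ∧ ∃ w, triGrid.Adj v w ∧ w ∉ S

/-- An outer boundary point of `S`: a point of `S` with a neighbor lying in an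
infinite connected component of the complement of `S`. -/
def IsOuterBoundaryPt (S : Set (ℤ × ℤ)) (v : ℤ × ℤ) : Prop :=
  v ∈ S ∧ ∃ w, triGrid.Adj v w ∧ w ∉ S ∧ (compOf S w).Infinite

/-- An interior point of `S`: a point of `S` all of whose neighbors lie in `S`. -/
def IsInteriorPt (S : Set (ℤ × ℤ)) (v : ℤ × ℤ) : Prop :=
  v ∈ S ∧ ∀ w, triGrid.Adj v w → w ∈ S

/-- The six neighbor directions of a grid point, in cyclic order. -/
def dirs : Fin 6 → ℤ × ℤ := ![(1,0), (0,1), (-1,1), (-1,0), (0,-1), (1,-1)]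

/-- The `i`-th neighbor of `v`, in the cyclic order of the 6-cycle of neighbors. -/
def nbr (v : ℤ × ℤ) (i : Fin 6) : ℤ × ℤ := (v.1 + (dirs i).1, v.2 + (dirs i).2)

/-- The neighbors of `v` lying in `S`. -/
def nbrsIn (S : Set (ℤ × ℤ)) (v : ℤ × ℤ) : Set (ℤ × ℤ) :=
  {w | triGrid.Adj v w ∧ w ∈ S}

/-- `v` is redundant w.r.t. `S`: the neighbors of `v` in `S` induce a connected
subgraph of the grid. -/
def Redundant (S : Set (ℤ × ℤ)) (v : ℤ × ℤ) : Prop :=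
  ∀ u ∈ nbrsIn S v, ∀ w ∈ nbrsIn S v, (gOn (nbrsIn S v)).Reachable u w

/-- `v` is erodable w.r.t. `S`: redundant and an outer boundary point of `S`. -/
def Erodable (S : Set (ℤ × ℤ)) (v : ℤ × ℤ) : Prop :=
  Redundant S v ∧ IsOuterBoundaryPt S v

/-- A set of indices of neighbors that is an arc: a nonempty set of consecutive
positions in the cyclic order. -/
def IsArc (I : Set (Fin 6)) : Prop :=
  ∃ (a : Fin 6) (len : ℕ), 0 < len ∧ len ≤ 6 ∧
    I = {i | ∃ k : ℕ, k < len ∧ i = a + (Fin.ofNat 6 k)}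

/-- The index set of the neighbors of `v` lying outside `S`. -/
def outIdx (S : Set (ℤ × ℤ)) (v : ℤ × ℤ) : Set (Fin 6) := {i | nbr v i ∉ S}

/-- A maximal arc of `v` w.r.t. `S`: a maximal arc of consecutive neighbors of `v`
none of which lies in `S`. -/
def IsMaximalArc (S : Set (ℤ × ℤ)) (v : ℤ × ℤ) (I : Set (Fin 6)) : Prop :=
  IsArc I ∧ (∀ i ∈ I, nbr v i ∉ S) ∧
  ∀ J : Set (Fin 6), IsArc J → (∀ i ∈ J, nbr v i ∉ S) → I ⊆ J → I = J

/-- `v` is SCE (strictly convex and erodable) w.r.t. `S`: the neighbors of `v`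
outside `S` form a single (maximal) arc of at least 3 points, and some neighbor of
`v` lies in an infinite connected component of the complement of `S`. -/
def SCE (S : Set (ℤ × ℤ)) (v : ℤ × ℤ) : Prop :=
  IsArc (outIdx S v) ∧ 3 ≤ (outIdx S v).ncard ∧
  ∃ i : Fin 6, nbr v i ∉ S ∧ (compOf S (nbr v i)).Infinite

/-- The level set `L_i` of `l` in `S`. -/
noncomputable def levelSet (S : Set (ℤ × ℤ)) (l : ℤ × ℤ) (i : ℕ) : Set (ℤ × ℤ) :=
  {u ∈ S | distS S l u = i}

/-- The closed neighborhood `N_i` of `l` in `S`. -/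
noncomputable def closedNbhd (S : Set (ℤ × ℤ)) (l : ℤ × ℤ) (i : ℕ) : Set (ℤ × ℤ) :=
  {u ∈ S | distS S l u ≤ i}

/-- `v ∈ L_i` is `(i,k)`-SCE-related: some `u ∈ L_i` is SCE w.r.t. `N_i` and is at
distance at most `k` from `v` within the subgraph induced by `L_i`. -/
noncomputable def SCERelated (S : Set (ℤ × ℤ)) (l : ℤ × ℤ) (i k : ℕ) (v : ℤ × ℤ) : Prop :=
  ∃ u ∈ levelSet S l i, SCE (closedNbhd S l i) u ∧
    (gOn (levelSet S l i)).Reachable v u ∧ (gOn (levelSet S l i)).dist v u ≤ k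


section Aux

/-- Helper graph on `Fin 6`: the 6-cycle restricted to indices outside `T`. -/
def cyc (T : Finset (Fin 6)) : SimpleGraph (Fin 6) where
  Adj i j := (j = i + 1 ∨ i = j + 1) ∧ i ∉ T ∧ j ∉ T
  symm := ⟨by tauto⟩
  loopless := ⟨by intro i h; have := h.1; fin_cases i <;> simp_all⟩

instance (T : Finset (Fin 6)) : DecidableRel (cyc T).Adj := fun i j =>
  inferInstanceAs (Decidable ((j = i + 1 ∨ i = j + 1) ∧ i ∉ T ∧ j ∉ T))

/-- A decidable version of `IsArc` for finsets. -/
def IsArcF (T : Finset (Fin 6)) : Prop :=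
  ∃ a : Fin 6, ∃ len : Fin 7, 0 < (len : ℕ) ∧
    ∀ i, (i ∈ T ↔ ∃ k : Fin 6, (k : ℕ) < (len : ℕ) ∧ i = a + k)

instance : DecidablePred IsArcF := fun T =>
  inferInstanceAs (Decidable (∃ a : Fin 6, ∃ len : Fin 7, 0 < (len : ℕ) ∧
    ∀ i, (i ∈ T ↔ ∃ k : Fin 6, (k : ℕ) < (len : ℕ) ∧ i = a + k)))

lemma key : ∀ T : Finset (Fin 6),
    ((∀ i ∉ T, ∀ j ∉ T, (cyc T).Reachable i j) ↔ (IsArcF T ∨ T = ∅)) := by decide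

@[simp] lemma dirs0 : dirs 0 = (1,0) := rfl
@[simp] lemma dirs1 : dirs 1 = (0,1) := rfl
@[simp] lemma dirs2 : dirs 2 = (-1,1) := rfl
@[simp] lemma dirs3 : dirs 3 = (-1,0) := rfl
@[simp] lemma dirs4 : dirs 4 = (0,-1) := rfl
@[simp] lemma dirs5 : dirs 5 = (1,-1) := rfl

lemma nbr_inj (v : ℤ × ℤ) (i j : Fin 6) (h : nbr v i = nbr v j) : i = j := by
  fin_cases i <;> fin_cases j <;> simp_all [nbr, Prod.ext_iff]

lemma adj_nbr (v : ℤ × ℤ) (i : Fin 6) : triGrid.Adj v (nbr v i) := by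
  fin_cases i <;>
    simp [triGrid, nbr, Set.mem_insert_iff, Set.mem_singleton_iff, Prod.ext_iff]

lemma adj_iff (v w : ℤ × ℤ) : triGrid.Adj v w ↔ ∃ i, w = nbr v i := by
  constructor
  · intro h
    simp only [triGrid, Set.mem_insert_iff, Set.mem_singleton_iff, Prod.mk.injEq] at h
    rcases h with ⟨h1,h2⟩|⟨h1,h2⟩|⟨h1,h2⟩|⟨h1,h2⟩|⟨h1,h2⟩|⟨h1,h2⟩
    · exact ⟨3, by simp [nbr, Prod.ext_iff]; omega⟩
    · exact ⟨0, by simp [nbr, Prod.ext_iff]; omega⟩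
    · exact ⟨4, by simp [nbr, Prod.ext_iff]; omega⟩
    · exact ⟨1, by simp [nbr, Prod.ext_iff]; omega⟩
    · exact ⟨2, by simp [nbr, Prod.ext_iff]; omega⟩
    · exact ⟨5, by simp [nbr, Prod.ext_iff]; omega⟩
  · rintro ⟨i, rfl⟩; exact adj_nbr v i

lemma nbr_adj_iff (v : ℤ × ℤ) (i j : Fin 6) :
    triGrid.Adj (nbr v i) (nbr v j) ↔ (j = i + 1 ∨ i = j + 1) := by
  have h : triGrid.Adj (nbr v i) (nbr v j) ↔
      (((dirs i).1 - (dirs j).1 = 1 ∧ (dirs i).2 - (dirs j).2 = 0) ∨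
       ((dirs i).1 - (dirs j).1 = -1 ∧ (dirs i).2 - (dirs j).2 = 0) ∨
       ((dirs i).1 - (dirs j).1 = 0 ∧ (dirs i).2 - (dirs j).2 = 1) ∨
       ((dirs i).1 - (dirs j).1 = 0 ∧ (dirs i).2 - (dirs j).2 = -1) ∨
       ((dirs i).1 - (dirs j).1 = 1 ∧ (dirs i).2 - (dirs j).2 = -1) ∨
       ((dirs i).1 - (dirs j).1 = -1 ∧ (dirs i).2 - (dirs j).2 = 1)) := by
    simp only [triGrid, nbr, Set.mem_insert_iff, Set.mem_singleton_iff, Prod.mk.injEq]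
    constructor <;> intro h <;> omega
  rw [h]
  fin_cases i <;> fin_cases j <;> decide

/-- The finset version of `outIdx`. -/
noncomputable def outFin (S : Set (ℤ × ℤ)) (v : ℤ × ℤ) : Finset (Fin 6) :=
  (Set.toFinite (outIdx S v)).toFinset

lemma mem_outFin {S : Set (ℤ × ℤ)} {v : ℤ × ℤ} {i : Fin 6} :
    i ∈ outFin S v ↔ nbr v i ∉ S := by
  simp [outFin, Set.Finite.mem_toFinset, outIdx]

lemma mem_nbrsIn {S : Set (ℤ × ℤ)} {v w : ℤ × ℤ} :
    w ∈ nbrsIn S v ↔ ∃ i : Fin 6, w = nbr v i ∧ nbr v i ∈ S := by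
  simp only [nbrsIn, Set.mem_setOf_eq, adj_iff]
  constructor
  · rintro ⟨⟨i, rfl⟩, hw⟩; exact ⟨i, rfl, hw⟩
  · rintro ⟨i, rfl, h⟩; exact ⟨⟨i, rfl⟩, h⟩

lemma walk_fwd (S : Set (ℤ × ℤ)) (v : ℤ × ℤ) {x y : ℤ × ℤ}
    (w : (gOn (nbrsIn S v)).Walk x y) :
    ∀ i j : Fin 6, x = nbr v i → y = nbr v j → (cyc (outFin S v)).Reachable i j := by
  induction w with
  | nil =>
    intro i j hi hj
    rw [nbr_inj v i j (hi.symm.trans hj)]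
  | @cons x z y h p ih =>
    intro i j hi hj
    obtain ⟨hadj, hx, hz⟩ : triGrid.Adj x z ∧ x ∈ nbrsIn S v ∧ z ∈ nbrsIn S v := h
    obtain ⟨i', rfl, hi'S⟩ := mem_nbrsIn.1 hz
    have hiS : nbr v i ∈ S := by
      obtain ⟨i'', he, hS⟩ := mem_nbrsIn.1 hx
      rwa [nbr_inj v i'' i (he.symm.trans hi)] at hS
    subst hi
    have hc : (cyc (outFin S v)).Adj i i' := by
      refine ⟨(nbr_adj_iff v i i').1 hadj, ?_, ?_⟩
      · rw [mem_outFin]; exact fun hn => hn hiS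
      · rw [mem_outFin]; exact fun hn => hn hi'S
    exact hc.reachable.trans (ih i' j rfl hj)

lemma walk_bwd (S : Set (ℤ × ℤ)) (v : ℤ × ℤ) {i j : Fin 6}
    (w : (cyc (outFin S v)).Walk i j) :
    (gOn (nbrsIn S v)).Reachable (nbr v i) (nbr v j) := by
  induction w with
  | nil => exact SimpleGraph.Reachable.refl _
  | @cons i k j h p ih =>
    obtain ⟨hc, hi, hk⟩ := h
    rw [mem_outFin, not_not] at hi hk
    have hadj : triGrid.Adj (nbr v i) (nbr v k) := (nbr_adj_iff v i k).2 hc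
    have : (gOn (nbrsIn S v)).Adj (nbr v i) (nbr v k) :=
      show triGrid.Adj _ _ ∧ _ ∧ _ from ⟨hadj, ⟨adj_nbr v i, hi⟩, ⟨adj_nbr v k, hk⟩⟩
    exact this.reachable.trans ih

lemma red_iff (S : Set (ℤ × ℤ)) (v : ℤ × ℤ) :
    Redundant S v ↔ ∀ i ∉ outFin S v, ∀ j ∉ outFin S v, (cyc (outFin S v)).Reachable i j := by
  constructor
  · intro hr i hi j hj
    rw [mem_outFin, not_not] at hi hj
    obtain ⟨w⟩ := hr (nbr v i) ⟨adj_nbr v i, hi⟩ (nbr v j) ⟨adj_nbr v j, hj⟩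
    exact walk_fwd S v w i j rfl rfl
  · intro h u hu w hw
    obtain ⟨i, rfl, hiS⟩ := mem_nbrsIn.1 hu
    obtain ⟨j, rfl, hjS⟩ := mem_nbrsIn.1 hw
    obtain ⟨p⟩ := h i (by rw [mem_outFin]; exact fun hn => hn hiS)
      j (by rw [mem_outFin]; exact fun hn => hn hjS)
    exact walk_bwd S v p

lemma cast_mk {k : ℕ} (h : k < 6) : Fin.ofNat 6 k = ⟨k, h⟩ :=
  Fin.ext (by simp [Nat.mod_eq_of_lt h])

lemma isArc_iff (S : Set (ℤ × ℤ)) (v : ℤ × ℤ) :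
    IsArc (outIdx S v) ↔ IsArcF (outFin S v) := by
  constructor
  · rintro ⟨a, len, hpos, hle, hset⟩
    refine ⟨a, ⟨len, by omega⟩, hpos, fun i => ?_⟩
    rw [show (i ∈ outFin S v) ↔ i ∈ outIdx S v from Set.Finite.mem_toFinset _, hset]
    simp only [Set.mem_setOf_eq]
    constructor
    · rintro ⟨k, hk, rfl⟩
      exact ⟨⟨k, by omega⟩, by simpa using hk, by rw [cast_mk (by omega : k < 6)]⟩
    · rintro ⟨k, hk, rfl⟩
      exact ⟨(k : ℕ), hk, by rw [Fin.ofNat_val_eq_self]⟩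
  · rintro ⟨a, len, hpos, hiff⟩
    refine ⟨a, (len : ℕ), hpos, by omega, ?_⟩
    ext i
    rw [show (i ∈ outIdx S v) ↔ i ∈ outFin S v from (Set.Finite.mem_toFinset _).symm, hiff i]
    simp only [Set.mem_setOf_eq]
    constructor
    · rintro ⟨k, hk, rfl⟩
      exact ⟨(k : ℕ), hk, by rw [Fin.ofNat_val_eq_self]⟩
    · rintro ⟨k, hk, rfl⟩
      exact ⟨⟨k, by omega⟩, by simpa using hk, by rw [cast_mk (by omega : k < 6)]⟩

lemma compOf_congr {S : Set (ℤ × ℤ)} {x y : ℤ × ℤ} (h : (gOn Sᶜ).Reachable x y) :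
    compOf S x = compOf S y := by
  ext z
  simp only [compOf, Set.mem_setOf_eq]
  exact ⟨fun hz => h.symm.trans hz, fun hz => h.trans hz⟩

lemma arc_comp (S : Set (ℤ × ℤ)) (v : ℤ × ℤ) (ha : IsArc (outIdx S v)) :
    ∀ i ∈ outIdx S v, ∀ j ∈ outIdx S v, compOf S (nbr v i) = compOf S (nbr v j) := by
  obtain ⟨a, len, hpos, hle, hset⟩ := ha
  have step : ∀ k : ℕ, k < len → compOf S (nbr v (a + Fin.ofNat 6 k)) = compOf S (nbr v a) := by
    intro k
    induction k with
    | zero => intro _; simp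
    | succ k ih =>
      intro hk
      have hmem : ∀ m : ℕ, m < len → nbr v (a + Fin.ofNat 6 m) ∉ S := by
        intro m hm
        have : (a + Fin.ofNat 6 m) ∈ outIdx S v := by
          rw [hset]; exact ⟨m, hm, rfl⟩
        exact this
      have hadj : triGrid.Adj (nbr v (a + Fin.ofNat 6 k)) (nbr v (a + Fin.ofNat 6 (k+1))) := by
        rw [nbr_adj_iff]
        left
        rw [add_assoc]; congr 1; apply Fin.ext; simp only [Fin.val_add, Fin.val_ofNat]; omega
      have hr : (gOn Sᶜ).Reachable (nbr v (a + Fin.ofNat 6 (k+1))) (nbr v (a + Fin.ofNat 6 k)) :=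
        SimpleGraph.Adj.reachable
          ⟨hadj.symm, hmem _ hk, hmem _ (by omega)⟩
      rw [compOf_congr hr, ih (by omega)]
  intro i hi j hj
  rw [hset] at hi hj
  obtain ⟨k, hk, rfl⟩ := hi
  obtain ⟨k', hk', rfl⟩ := hj
  rw [step k hk, step k' hk']

end Aux

/-- For a boundary point `v` of a shape `S` with at least two points:
(a) `v` is redundant iff its neighbors outside `S` form a single maximal arc, and
(b) `v` is erodable iff its neighbors outside `S` form a single maximal arc all of
whose points lie in an infinite connected component of the complement of `S`. -/
theorem stmt4 (S : Set (ℤ × ℤ)) (hS : IsShape S) (h2 : 2 ≤ S.ncard)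
    (v : ℤ × ℤ) (hv : v ∈ S) (hb : IsBoundaryPt S v) :
    (Redundant S v ↔ IsArc (outIdx S v)) ∧
    (Erodable S v ↔ (IsArc (outIdx S v) ∧
      ∀ i ∈ outIdx S v, (compOf S (nbr v i)).Infinite)) := by
  obtain ⟨hvS, w0, hadjw, hwS⟩ := hb
  obtain ⟨i0, rfl⟩ := (adj_iff v w0).1 hadjw
  have hi0 : i0 ∈ outFin S v := mem_outFin.2 hwS
  have hne : outFin S v ≠ ∅ := fun h => by rw [h] at hi0; exact absurd hi0 (by simp)
  have ha : Redundant S v ↔ IsArc (outIdx S v) := by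
    rw [red_iff, key (outFin S v), or_iff_left hne, isArc_iff]
  refine ⟨ha, ?_⟩
  constructor
  · rintro ⟨hred, hout⟩
    have harc := ha.1 hred
    refine ⟨harc, ?_⟩
    obtain ⟨-, u, hadju, huS, hinf⟩ := hout
    obtain ⟨j0, rfl⟩ := (adj_iff v u).1 hadju
    intro i hi
    rw [arc_comp S v harc i hi j0 huS]
    exact hinf
  · rintro ⟨harc, hinf⟩
    have hout : i0 ∈ outIdx S v := hwS
    exact ⟨ha.2 harc, hvS, nbr v i0, adj_nbr v i0, hwS, hinf i0 hout⟩
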